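/- arXiv:2002.07987 — 3 statements merged into one kernel-verified Lean document; each statement's English description precedes it below -/
import Mathlib

section
/- Let (Ω, P) be a probability space, let ω be a nonnegative random variable, x and x̂ real random variables with ω·(x − x̂)² integrable and ω·(x − x̂) integrable, and let r be a square-integrable random variable independent of the random vector (ω, x, x̂) with E[r] = 0. Let a, b, y be real numbers with b ≠ 0, and set v* = (y − a·x̂)/b. Then E[ω·(a·x + b·v* + r − y)²] = a²·E[ω·(x − x̂)²] + E[ω]·E[r²]. -/
open MeasureTheory ProbabilityTheory

/-!
Under the control `v* = (y − a·x̂)/b` the tracking error collapses to `a·(x − x̂) + r`.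
Expanding the weighted square, the cross term `2a·E[w·(x − x̂)·r]` vanishes because `r` is
centred and independent of `w·(x − x̂)`, and independence also factors `E[w·r²]` as
`E[w]·E[r²]`.
-/

namespace ProbabilityTheory

variable {Ω : Type*} [MeasurableSpace Ω] {μ : Measure Ω}

lemma IndepFun.integral_mul_eq_zero_of_integral_eq_zero {X r : Ω → ℝ} (hXr : IndepFun X r μ)
    (hX : AEStronglyMeasurable X μ) (hr : AEStronglyMeasurable r μ) (hr0 : ∫ ω, r ω ∂μ = 0) :
    ∫ ω, X ω * r ω ∂μ = 0 := by
  rw [hXr.integral_fun_mul_eq_mul_integral hX hr, hr0, mul_zero]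

theorem integral_mul_mul_add_sq_of_indepFun {w e r : Ω → ℝ} (a : ℝ)
    (hindep : IndepFun (fun ω => (w ω, e ω)) r μ) (hw : Integrable w μ)
    (hwe : Integrable (fun ω => w ω * e ω) μ) (hwe2 : Integrable (fun ω => w ω * e ω ^ 2) μ)
    (hr : Integrable r μ) (hr2 : Integrable (fun ω => r ω ^ 2) μ) (hr0 : ∫ ω, r ω ∂μ = 0) :
    ∫ ω, w ω * (a * e ω + r ω) ^ 2 ∂μ
      = a ^ 2 * ∫ ω, w ω * e ω ^ 2 ∂μ + (∫ ω, w ω ∂μ) * ∫ ω, r ω ^ 2 ∂μ := by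
  have hwe_r : IndepFun (fun ω => w ω * e ω) r μ :=
    hindep.comp (φ := fun p : ℝ × ℝ => p.1 * p.2) (by fun_prop) measurable_id
  have hw_r2 : IndepFun w (fun ω => r ω ^ 2) μ :=
    hindep.comp (φ := Prod.fst) (ψ := fun t : ℝ => t ^ 2) measurable_fst (by fun_prop)
  have hcross : Integrable (fun ω => w ω * e ω * r ω) μ := hwe_r.integrable_mul hwe hr
  have hwr2 : Integrable (fun ω => w ω * r ω ^ 2) μ := hw_r2.integrable_mul hw hr2
  have hcross_zero : ∫ ω, w ω * e ω * r ω ∂μ = 0 :=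
    hwe_r.integral_mul_eq_zero_of_integral_eq_zero hwe.aestronglyMeasurable
      hr.aestronglyMeasurable hr0
  have hwr2_split : ∫ ω, w ω * r ω ^ 2 ∂μ = (∫ ω, w ω ∂μ) * ∫ ω, r ω ^ 2 ∂μ :=
    hw_r2.integral_fun_mul_eq_mul_integral hw.aestronglyMeasurable hr2.aestronglyMeasurable
  have hsq : Integrable (fun ω => a ^ 2 * (w ω * e ω ^ 2)) μ := hwe2.const_mul _
  have hcross' : Integrable (fun ω => 2 * a * (w ω * e ω * r ω)) μ := hcross.const_mul _
  calc ∫ ω, w ω * (a * e ω + r ω) ^ 2 ∂μ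
      = ∫ ω, a ^ 2 * (w ω * e ω ^ 2) + 2 * a * (w ω * e ω * r ω) + w ω * r ω ^ 2 ∂μ := by
        congr 1; funext ω; ring
    _ = a ^ 2 * ∫ ω, w ω * e ω ^ 2 ∂μ + 2 * a * ∫ ω, w ω * e ω * r ω ∂μ
          + ∫ ω, w ω * r ω ^ 2 ∂μ := by
        rw [integral_add (hsq.fun_add hcross') hwr2, integral_add hsq hcross',
          integral_const_mul, integral_const_mul]
    _ = a ^ 2 * ∫ ω, w ω * e ω ^ 2 ∂μ + (∫ ω, w ω ∂μ) * ∫ ω, r ω ^ 2 ∂μ := by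
        rw [hcross_zero, hwr2_split, mul_zero, add_zero]

end ProbabilityTheory

lemma tracking_error_eq_of_control {a b : ℝ} (hb : b ≠ 0) (x xhat r y : ℝ) :
    a * x + b * ((y - a * xhat) / b) + r - y = a * (x - xhat) + r := by
  rw [mul_div_cancel₀ _ hb]
  ring

theorem tracking_error_equivalence_general {Ω : Type*} [MeasureSpace Ω]
    [IsProbabilityMeasure (ℙ : Measure Ω)]
    (w x xhat r : Ω → ℝ) (hwInt : Integrable w)
    (h1 : Integrable (fun ω => w ω * (x ω - xhat ω) ^ 2))
    (h2 : Integrable (fun ω => w ω * (x ω - xhat ω)))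
    (hr : MemLp r 2 ℙ)
    (hindep : IndepFun (fun ω => (w ω, x ω, xhat ω)) r)
    (hrmean : (∫ ω, r ω) = 0)
    (a b y : ℝ) (hb : b ≠ 0) (vstar : Ω → ℝ)
    (hvstar : ∀ ω, vstar ω = (y - a * xhat ω) / b) :
    (∫ ω, w ω * (a * x ω + b * vstar ω + r ω - y) ^ 2)
      = a ^ 2 * (∫ ω, w ω * (x ω - xhat ω) ^ 2) + (∫ ω, w ω) * ∫ ω, r ω ^ 2 := by
  have hindep_err : IndepFun (fun ω => (w ω, x ω - xhat ω)) r :=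
    hindep.comp (φ := fun p : ℝ × ℝ × ℝ => (p.1, p.2.1 - p.2.2)) (by fun_prop) measurable_id
  simp_rw [hvstar, tracking_error_eq_of_control hb]
  exact integral_mul_mul_add_sq_of_indepFun a hindep_err hwInt h2 h1
    (hr.integrable one_le_two) hr.integrable_sq hrmean

/-- The equivalence step in Proposition 1: under the optimal control
`v* = (y − a·x̂)/b`, with zero-mean square-integrable noise `r` independent of
`(w, x, x̂)`, the weighted squared tracking error satisfies
`E[w·(a·x + b·v* + r − y)²] = a²·E[w·(x − x̂)²] + E[w]·E[r²]`. -/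
theorem tracking_error_equivalence {Ω : Type*} [MeasureSpace Ω]
    [IsProbabilityMeasure (ℙ : Measure Ω)]
    (w x xhat r : Ω → ℝ) (hw0 : ∀ ω, 0 ≤ w ω) (hwInt : Integrable w)
    (h1 : Integrable (fun ω => w ω * (x ω - xhat ω) ^ 2))
    (h2 : Integrable (fun ω => w ω * (x ω - xhat ω)))
    (hr : MemLp r 2 ℙ)
    (hindep : IndepFun (fun ω => (w ω, x ω, xhat ω)) r)
    (hrmean : (∫ ω, r ω) = 0)
    (a b y : ℝ) (hb : b ≠ 0) (vstar : Ω → ℝ)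
    (hvstar : ∀ ω, vstar ω = (y - a * xhat ω) / b) :
    (∫ ω, w ω * (a * x ω + b * vstar ω + r ω - y) ^ 2)
      = a ^ 2 * (∫ ω, w ω * (x ω - xhat ω) ^ 2) + (∫ ω, w ω) * ∫ ω, r ω ^ 2 :=
  tracking_error_equivalence_general w x xhat r hwInt h1 h2 hr hindep hrmean a b y hb vstar hvstar
end

section
/- Let p, ρ ∈ (0, 1], σ > 0, ω̄ > 0 and V > 0 be constants. On a probability space with a filtration (ℱ_t)_{t≥0}, let (Q_t), (H_t), (ω_t) be real-valued processes such that Q_t, H_t and ω_{t+1} are ℱ_t-measurable for each t, Q_0 is square-integrable, H_0 = 0, H_t ≥ 0, each ω_t is nonnegative and integrable with E[ω_t] = ω̄, ω_{t+1} is independent of Q_t, and ω_{t+1}·Q_t² is integrable for each t. For each t, let S_t be a {0,1}-valued random variable independent of ℱ_t with P(S_t = 1) = p, and let A_t be a square-integrable random variable independent of the σ-algebra generated by ℱ_t and S_t, with E[A_t] = 0 and E[A_t²] = σ². Define the update index J_t = (ω_{t+1} − ω̄ + ω̄/(p·ρ))·p·Q_t², the decision U_t = 1 if J_t > V·H_t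 and U_t = 0 otherwise, and the dynamics Q_{t+1} = (1 − U_t·S_t)·Q_t + A_t and H_{t+1} = max(H_t − ρ + U_t, 0). Then (i) limsup_{T→∞} (1/T)·∑_{t=0}^{T−1} E[U_t] ≤ ρ, and (ii) limsup_{T→∞} (1/T)·∑_{t=0}^{T−1} E[ω_{t+1}·Q_{t+1}²] ≤ ω̄·σ²/(p·ρ) + V/2. -/
/-!
The proof is a Lyapunov drift-plus-penalty argument with Lyapunov function
`L t = B·E[Q t²] + (V/2)·E[H t²]`, where `B = ω̄/(pρ) - ω̄ ≥ 0`. Conditioning on the past, the error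
recursion gives `E[v·Q(t+1)²] = E[v·Q t²] - p·E[v·U t·Q t²] + σ²·E[v]` for every past weight `v`,
and squaring the queue recursion gives `(V/2)·(H(t+1)² - H t²) ≤ V/2 + J t·(U t - ρ)`. Since
`J t = p·(ω(t+1) + B)·Q t²`, the terms in `U t` cancel, and `ρ·E[J t] = ω̄·E[Q t²]` absorbs
the rest, so the expected UoI plus the drift `L(t+1) - L t` is at most `ω̄σ²/(pρ) + V/2` in every
slot.
Telescoping gives (ii). It also gives `E[H T²] = O(T)`, hence `E[H T] = o(T)`, and since the
virtual queue grows by at least `U t - ρ` per slot, this is (i).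
-/

open MeasureTheory ProbabilityTheory Filter Topology
open scoped ENNReal

lemma limsup_le_of_le_of_tendsto {f g : ℕ → ℝ} {c : ℝ} (hf : ∀ n, 0 ≤ f n)
    (hfg : ∀ᶠ n in atTop, f n ≤ g n) (hg : Tendsto g atTop (𝓝 c)) :
    limsup f atTop ≤ c := by
  rw [← hg.limsup_eq]
  exact limsup_le_limsup hfg (isCoboundedUnder_le_of_le atTop hf) hg.isBoundedUnder_le

lemma sum_add_le_of_drift {c L : ℕ → ℝ} {K : ℝ} (h : ∀ t, c t + L (t + 1) - L t ≤ K)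
    (T : ℕ) : ∑ t ∈ Finset.range T, c t + L T ≤ T * K + L 0 := by
  induction T with
  | zero => simp
  | succ T ih =>
    rw [Finset.sum_range_succ]
    push_cast
    linarith [h T]

lemma limsup_avg_le_of_le_add {f g : ℕ → ℝ} {c : ℝ} (hf : ∀ t, 0 ≤ f t)
    (hfg : ∀ T : ℕ, ∑ t ∈ Finset.range T, f t ≤ T * c + g T)
    (hg : Tendsto (fun T : ℕ => g T / T) atTop (𝓝 0)) :
    limsup (fun T : ℕ => (1 / (T : ℝ)) * ∑ t ∈ Finset.range T, f t) atTop ≤ c := by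
  refine limsup_le_of_le_of_tendsto
    (fun T => mul_nonneg (by positivity) (Finset.sum_nonneg fun t _ => hf t)) ?_
    (by simpa using tendsto_const_nhds (x := c) |>.add hg)
  filter_upwards [eventually_gt_atTop 0] with T hT
  have hT' : (0 : ℝ) < T := by exact_mod_cast hT
  rw [one_div, inv_mul_le_iff₀ hT', mul_add, mul_div_cancel₀ _ hT'.ne']
  exact hfg T

lemma limsup_avg_le_of_drift {c L : ℕ → ℝ} {K : ℝ} (hc : ∀ t, 0 ≤ c t) (hL : ∀ t, 0 ≤ L t)
    (h : ∀ t, c t + L (t + 1) - L t ≤ K) :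
    limsup (fun T : ℕ => (1 / (T : ℝ)) * ∑ t ∈ Finset.range T, c t) atTop ≤ K :=
  limsup_avg_le_of_le_add hc (g := fun _ => L 0)
    (fun T => by linarith [sum_add_le_of_drift h T, hL T])
    (tendsto_const_div_atTop_nhds_zero_nat (L 0))

lemma limsup_avg_le_of_queue {u h : ℕ → ℝ} {ρ : ℝ} (hu : ∀ t, 0 ≤ u t) (h0 : h 0 = 0)
    (hstep : ∀ t, h t - ρ + u t ≤ h (t + 1))
    (hh : Tendsto (fun T : ℕ => h T / T) atTop (𝓝 0)) :
    limsup (fun T : ℕ => (1 / (T : ℝ)) * ∑ t ∈ Finset.range T, u t) atTop ≤ ρ :=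
  limsup_avg_le_of_le_add hu
    (fun T => by
      linarith [sum_add_le_of_drift (c := u) (L := fun t => -h t) (K := ρ)
        (fun t => by linarith [hstep t]) T])
    hh

lemma tendsto_div_natCast_of_sq_le {x : ℕ → ℝ} {a b : ℝ} (h : ∀ T : ℕ, x T ^ 2 ≤ a * T + b) :
    Tendsto (fun T : ℕ => x T / T) atTop (𝓝 0) := by
  have hbound : Tendsto (fun T : ℕ => √(a / T + b / T / T)) atTop (𝓝 0) := by
    have hb := (tendsto_const_div_atTop_nhds_zero_nat b).div_atTop tendsto_natCast_atTop_atTop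
    simpa using ((tendsto_const_div_atTop_nhds_zero_nat a).add hb).sqrt
  refine squeeze_zero_norm' ?_ hbound
  filter_upwards [eventually_gt_atTop 0] with T hT
  have hT' : (0 : ℝ) < T := by exact_mod_cast hT
  rw [Real.norm_eq_abs, ← Real.sqrt_sq_eq_abs]
  refine Real.sqrt_le_sqrt ?_
  rw [div_pow, div_le_iff₀ (by positivity)]
  calc x T ^ 2 ≤ a * T + b := h T
    _ = (a / T + b / T / T) * T ^ 2 := by field_simp

lemma queue_le_natCast {h u : ℕ → ℝ} {ρ : ℝ} (hρ : 0 ≤ ρ) (hu : ∀ t, u t ≤ 1) (h0 : h 0 = 0)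
    (hdyn : ∀ t, h (t + 1) = max (h t - ρ + u t) 0) (t : ℕ) : h t ≤ t := by
  induction t with
  | zero => simp [h0]
  | succ t ih =>
    rw [hdyn t]
    push_cast
    exact max_le (by linarith [hu t]) (by positivity)

/-- The threshold rule picks the `u ∈ {0, 1}` minimising `(V h - j)·u`, the only `u`-dependent
part of the drift-plus-penalty bound. -/
lemma sq_max_threshold_le {h j u V ρ : ℝ} (hV : 0 ≤ V) (hρ : ρ ∈ Set.Icc (0 : ℝ) 1)
    (hu : u = if j > V * h then 1 else 0) :
    V / 2 * max (h - ρ + u) 0 ^ 2 ≤ V / 2 * h ^ 2 + V / 2 + j * (u - ρ) := by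
  obtain ⟨hρ0, hρ1⟩ := hρ
  have hmax : max (h - ρ + u) 0 ^ 2 ≤ (h - ρ + u) ^ 2 := by
    rcases le_total 0 (h - ρ + u) with h' | h'
    · rw [max_eq_left h']
    · rw [max_eq_right h']; simpa using sq_nonneg (h - ρ + u)
  have hthr : (V * h - j) * (u - ρ) ≤ 0 := by
    split_ifs at hu with hj <;> subst hu <;> nlinarith
  have hu2 : (u - ρ) ^ 2 ≤ 1 := by
    split_ifs at hu <;> subst hu <;> nlinarith
  nlinarith [mul_le_mul_of_nonneg_left hmax (by positivity : 0 ≤ V / 2),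
    mul_le_mul_of_nonneg_left hu2 (by positivity : 0 ≤ V / 2)]

lemma one_sub_mul_eq_zero_or_one {u s : ℝ} (hu : u = 0 ∨ u = 1) (hs : s = 0 ∨ s = 1) :
    1 - u * s = 0 ∨ 1 - u * s = 1 := by
  rcases hu with hu | hu <;> rcases hs with hs | hs <;> simp [hu, hs]

section Probability

variable {Ω : Type*}

lemma ProbabilityTheory.Indep.indepFun {m₁ m₂ m0 : MeasurableSpace Ω} {μ : Measure Ω}
    (h : Indep m₁ m₂ μ) {f g : Ω → ℝ} (hf : Measurable[m₁] f) (hg : Measurable[m₂] g) :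
    IndepFun f g μ := by
  rw [IndepFun_iff_Indep]
  exact indep_of_indep_of_le_right (indep_of_indep_of_le_left h hf.comap_le) hg.comap_le

lemma ProbabilityTheory.Indep.integral_mul {m₁ m₂ m0 : MeasurableSpace Ω} {μ : Measure Ω}
    (h : Indep m₁ m₂ μ) (h₁ : m₁ ≤ m0) (h₂ : m₂ ≤ m0) {f g : Ω → ℝ} (hf : Measurable[m₁] f)
    (hg : Measurable[m₂] g) : ∫ x, f x * g x ∂μ = (∫ x, f x ∂μ) * ∫ x, g x ∂μ :=
  (h.indepFun hf hg).integral_fun_mul_eq_mul_integral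
    (hf.mono h₁ le_rfl).aestronglyMeasurable (hg.mono h₂ le_rfl).aestronglyMeasurable

section Integrals

variable {m0 : MeasurableSpace Ω} {μ : Measure Ω}

lemma integral_eq_of_eq_zero_or_one {S : Ω → ℝ} {p : ℝ} (hp : 0 ≤ p) (hS : Measurable S)
    (hS01 : ∀ x, S x = 0 ∨ S x = 1) (hSp : μ {x | S x = 1} = ENNReal.ofReal p) :
    ∫ x, S x ∂μ = p := by
  have hind : S = {x | S x = 1}.indicator 1 := by
    ext x
    rcases hS01 x with h | h <;> simp [Set.indicator, h]
  have hs : MeasurableSet {x | S x = 1} := hS (measurableSet_singleton 1)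
  rw [hind, integral_indicator_one hs, measureReal_def, hSp, ENNReal.toReal_ofReal hp]

lemma MeasureTheory.Integrable.mul_of_eq_zero_or_one {f U : Ω → ℝ} (hf : Integrable f μ)
    (hU : AEStronglyMeasurable U μ) (hU01 : ∀ x, U x = 0 ∨ U x = 1) :
    Integrable (fun x => f x * U x) μ :=
  hf.mul_bdd hU (c := 1) (ae_of_all _ fun x => by rcases hU01 x with h | h <;> simp [h])

lemma integrable_mul_of_integrable_mul_sq {v Q : Ω → ℝ} (hQ : AEStronglyMeasurable Q μ)
    (hv : Integrable v μ) (hvQ : Integrable (fun x => v x * Q x ^ 2) μ) :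
    Integrable (fun x => v x * Q x) μ := by
  refine (hv.norm.add hvQ.norm).mono' (hv.aestronglyMeasurable.mul hQ) (ae_of_all _ fun x => ?_)
  have hQ : |Q x| ≤ 1 + Q x ^ 2 := by nlinarith [sq_abs (Q x), abs_nonneg (Q x)]
  simp only [norm_mul, Real.norm_eq_abs, abs_pow, Pi.add_apply]
  nlinarith [abs_nonneg (v x), sq_abs (Q x)]

lemma sq_integral_le_integral_sq [IsProbabilityMeasure μ] {X : Ω → ℝ} (hX : MemLp X 2 μ) :
    (∫ x, X x ∂μ) ^ 2 ≤ ∫ x, X x ^ 2 ∂μ := by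
  have := variance_eq_sub hX
  have := variance_nonneg X μ
  simp only [Pi.pow_apply] at *
  linarith

lemma measurable_of_threshold {m : MeasurableSpace Ω} {H J U : Ω → ℝ} {V : ℝ}
    (hH : Measurable[m] H) (hJ : Measurable[m] J)
    (hU : ∀ x, U x = if J x > V * H x then 1 else 0) : Measurable[m] U := by
  rw [funext hU]
  exact Measurable.ite (measurableSet_lt (measurable_const.mul hH) hJ) measurable_const
    measurable_const

lemma integral_sq_max_threshold_le [IsProbabilityMeasure μ] {H J U : Ω → ℝ} {V ρ : ℝ}
    (hV : 0 ≤ V) (hρ : ρ ∈ Set.Icc (0 : ℝ) 1) (hH : MemLp H 2 μ) (hJ : Integrable J μ)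
    (hUm : Measurable U) (hU : ∀ x, U x = if J x > V * H x then 1 else 0) :
    V / 2 * ∫ x, max (H x - ρ + U x) 0 ^ 2 ∂μ
      ≤ V / 2 * ∫ x, H x ^ 2 ∂μ + V / 2 + (∫ x, J x * U x ∂μ - ρ * ∫ x, J x ∂μ) := by
  have hU01 : ∀ x, U x = 0 ∨ U x = 1 := fun x => by rw [hU x]; split_ifs <;> simp
  have hUL2 : MemLp U 2 μ := MemLp.of_bound hUm.aestronglyMeasurable 1
    (ae_of_all _ fun x => by rcases hU01 x with h | h <;> simp [h])
  have hnext : MemLp (fun x => max (H x - ρ + U x) 0) 2 μ :=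
    ((hH.sub (memLp_const ρ)).add hUL2).sup (memLp_const 0)
  have hJU : Integrable (fun x => J x * U x) μ :=
    hJ.mul_of_eq_zero_or_one hUm.aestronglyMeasurable hU01
  have hJUρ : Integrable (fun x => J x * (U x - ρ)) μ :=
    (hJU.sub (hJ.mul_const ρ)).congr (ae_of_all _ fun x => (mul_sub _ _ _).symm)
  have hH2 : Integrable (fun x => V / 2 * H x ^ 2 + V / 2) μ :=
    (hH.integrable_sq.const_mul (V / 2)).add (integrable_const (V / 2))
  calc V / 2 * ∫ x, max (H x - ρ + U x) 0 ^ 2 ∂μ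
      = ∫ x, V / 2 * max (H x - ρ + U x) 0 ^ 2 ∂μ := (integral_const_mul _ _).symm
    _ ≤ ∫ x, (V / 2 * H x ^ 2 + V / 2 + J x * (U x - ρ)) ∂μ :=
      integral_mono (hnext.integrable_sq.const_mul (V / 2)) (hH2.add hJUρ)
        fun x => sq_max_threshold_le hV hρ (hU x)
    _ = V / 2 * ∫ x, H x ^ 2 ∂μ + V / 2 + (∫ x, J x * U x ∂μ - ρ * ∫ x, J x ∂μ) := by
      have hsplit : ∫ x, J x * (U x - ρ) ∂μ = ∫ x, J x * U x ∂μ - ρ * ∫ x, J x ∂μ := by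
        simp_rw [mul_sub]
        rw [integral_sub hJU (hJ.mul_const ρ), integral_mul_const, mul_comm]
      rw [integral_add hH2 hJUρ, integral_add (hH.integrable_sq.const_mul _) (integrable_const _),
        integral_const_mul, hsplit]
      simp

/-- With `B = ω̄/(pρ) - ω̄` the index is `J = p·(w + B)·Q²`, and `ρ·p·(ω̄ + B) = ω̄`. -/
lemma integral_sq_max_index_le [IsProbabilityMeasure μ] {Q H w U J : Ω → ℝ} {p wbar ρ V : ℝ}
    (hp : 0 < p) (hρ : ρ ∈ Set.Ioc (0 : ℝ) 1) (hV : 0 ≤ V) (hQ : MemLp Q 2 μ) (hH : MemLp H 2 μ)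
    (hwQ : Integrable (fun x => w x * Q x ^ 2) μ)
    (hwQ2 : ∫ x, w x * Q x ^ 2 ∂μ = wbar * ∫ x, Q x ^ 2 ∂μ) (hUm : Measurable U)
    (hJ : ∀ x, J x = (w x - wbar + wbar / (p * ρ)) * p * Q x ^ 2)
    (hU : ∀ x, U x = if J x > V * H x then 1 else 0) :
    V / 2 * ∫ x, max (H x - ρ + U x) 0 ^ 2 ∂μ
      ≤ V / 2 * ∫ x, H x ^ 2 ∂μ + V / 2 + p * ∫ x, w x * Q x ^ 2 * U x ∂μ
        + p * (wbar / (p * ρ) - wbar) * ∫ x, Q x ^ 2 * U x ∂μ - wbar * ∫ x, Q x ^ 2 ∂μ := by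
  set B := wbar / (p * ρ) - wbar
  have hU01 : ∀ x, U x = 0 ∨ U x = 1 := fun x => by rw [hU x]; split_ifs <;> simp
  have hQ2 := hQ.integrable_sq
  have hJeq : J = fun x => p * (w x * Q x ^ 2) + p * B * Q x ^ 2 := funext fun x => by
    rw [hJ]; ring
  have hJi : Integrable J μ := hJeq ▸ (hwQ.const_mul p).add (hQ2.const_mul (p * B))
  have hJU : ∫ x, J x * U x ∂μ
      = p * ∫ x, w x * Q x ^ 2 * U x ∂μ + p * B * ∫ x, Q x ^ 2 * U x ∂μ := by
    have hpt : (fun x => J x * U x)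
        = fun x => p * (w x * Q x ^ 2 * U x) + p * B * (Q x ^ 2 * U x) :=
      funext fun x => by rw [hJeq]; ring
    rw [hpt, integral_add ((hwQ.mul_of_eq_zero_or_one hUm.aestronglyMeasurable hU01).const_mul p)
      ((hQ2.mul_of_eq_zero_or_one hUm.aestronglyMeasurable hU01).const_mul (p * B)),
      integral_const_mul, integral_const_mul]
  have hJint : ρ * ∫ x, J x ∂μ = wbar * ∫ x, Q x ^ 2 ∂μ := by
    rw [hJeq, integral_add (hwQ.const_mul p) (hQ2.const_mul (p * B)), integral_const_mul,
      integral_const_mul, hwQ2]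
    simp only [B]
    field_simp [hp.ne', hρ.1.ne']
    ring
  have := integral_sq_max_threshold_le hV ⟨hρ.1.le, hρ.2⟩ hH hJi hUm hU
  rw [hJU, hJint] at this
  linarith

lemma limsup_avg_integral_le_of_queue [IsProbabilityMeasure μ] {H U : ℕ → Ω → ℝ} {ρ a b : ℝ}
    (hH : ∀ t, MemLp (H t) 2 μ) (hU : ∀ t, Integrable (U t) μ) (hU0 : ∀ t x, 0 ≤ U t x)
    (hH0 : ∀ x, H 0 x = 0) (hdyn : ∀ t x, H (t + 1) x = max (H t x - ρ + U t x) 0)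
    (hsq : ∀ T : ℕ, ∫ x, H T x ^ 2 ∂μ ≤ a * T + b) :
    limsup (fun T : ℕ => (1 / (T : ℝ)) * ∑ t ∈ Finset.range T, ∫ x, U t x ∂μ) atTop ≤ ρ := by
  refine limsup_avg_le_of_queue (fun t => integral_nonneg (hU0 t)) (by simp [hH0]) (fun t => ?_)
    (tendsto_div_natCast_of_sq_le fun T => (sq_integral_le_integral_sq (hH T)).trans (hsq T))
  have hHi := (hH t).integrable one_le_two
  calc ∫ x, H t x ∂μ - ρ + ∫ x, U t x ∂μ = ∫ x, (H t x - ρ + U t x) ∂μ := by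
        rw [integral_add ?_ (hU t), integral_sub hHi (integrable_const ρ)]
        · simp
        · exact hHi.sub (integrable_const ρ)
    _ ≤ ∫ x, H (t + 1) x ∂μ :=
      integral_mono ((hHi.sub (integrable_const ρ)).add (hU t))
        ((hH (t + 1)).integrable one_le_two) fun x => (hdyn t x).symm ▸ le_max_left _ _

lemma memLp_two_of_update {Q S A U : ℕ → Ω → ℝ} (hS : ∀ t, Measurable (S t))
    (hS01 : ∀ t x, S t x = 0 ∨ S t x = 1) (hA : ∀ t, MemLp (A t) 2 μ) (hU : ∀ t, Measurable (U t))
    (hU01 : ∀ t x, U t x = 0 ∨ U t x = 1) (hQ0 : MemLp (Q 0) 2 μ)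
    (hQdyn : ∀ t x, Q (t + 1) x = (1 - U t x * S t x) * Q t x + A t x) (t : ℕ) :
    MemLp (Q t) 2 μ := by
  induction t with
  | zero => exact hQ0
  | succ t ih =>
    rw [funext (hQdyn t)]
    refine MemLp.add (ih.mono ((measurable_const.sub ((hU t).mul (hS t))).aestronglyMeasurable.mul
      ih.aestronglyMeasurable) (ae_of_all _ fun x => ?_)) (hA t)
    rw [norm_mul]
    refine mul_le_of_le_one_left (norm_nonneg _) ?_
    rcases one_sub_mul_eq_zero_or_one (hU01 t x) (hS01 t x) with hg | hg <;> simp [hg]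

lemma memLp_of_queue [IsFiniteMeasure μ] {H U : ℕ → Ω → ℝ} {ρ : ℝ} (hρ : 0 ≤ ρ)
    (hH : ∀ t, AEStronglyMeasurable (H t) μ) (hHpos : ∀ t x, 0 ≤ H t x) (hU : ∀ t x, U t x ≤ 1)
    (hH0 : ∀ x, H 0 x = 0) (hdyn : ∀ t x, H (t + 1) x = max (H t x - ρ + U t x) 0)
    (q : ℝ≥0∞) (t : ℕ) : MemLp (H t) q μ :=
  MemLp.of_bound (hH t) t (ae_of_all _ fun x => by
    rw [Real.norm_eq_abs, abs_of_nonneg (hHpos t x)]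
    exact queue_le_natCast (h := fun t => H t x) (u := fun t => U t x) hρ (fun t => hU t x)
      (hH0 x) (fun t => hdyn t x) t)

end Integrals

/-- `S` and `A` are the channel success indicator `S_t` and the error increment `A_t` of one slot,
and `m` is the past `ℱ_t`. -/
structure IsFreshChannelNoise (m : MeasurableSpace Ω) {m0 : MeasurableSpace Ω} (μ : Measure Ω)
    (S A : Ω → ℝ) (p σ : ℝ) : Prop where
  measurable_S : Measurable S
  S_eq_zero_or_one : ∀ x, S x = 0 ∨ S x = 1
  indep_S : Indep m (MeasurableSpace.comap S inferInstance) μ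
  integral_S : ∫ x, S x ∂μ = p
  measurable_A : Measurable A
  memLp_A : MemLp A 2 μ
  indep_A : Indep (m ⊔ MeasurableSpace.comap S inferInstance)
    (MeasurableSpace.comap A inferInstance) μ
  integral_A : ∫ x, A x ∂μ = 0
  integral_A_sq : ∫ x, A x ^ 2 ∂μ = σ ^ 2

namespace IsFreshChannelNoise

variable {m m0 : MeasurableSpace Ω} {μ : Measure Ω} {S A Q U : Ω → ℝ} {p σ : ℝ}

lemma le_sup_comap_S (h : IsFreshChannelNoise m μ S A p σ) (hm : m ≤ m0) :
    m ⊔ MeasurableSpace.comap S inferInstance ≤ m0 :=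
  sup_le hm h.measurable_S.comap_le

lemma integral_mul_S (h : IsFreshChannelNoise m μ S A p σ) (hm : m ≤ m0) {f : Ω → ℝ}
    (hf : Measurable[m] f) : ∫ x, f x * S x ∂μ = (∫ x, f x ∂μ) * p := by
  rw [h.indep_S.integral_mul hm h.measurable_S.comap_le hf (Measurable.of_comap_le le_rfl),
    h.integral_S]

lemma integral_mul_A (h : IsFreshChannelNoise m μ S A p σ) (hm : m ≤ m0) {f : Ω → ℝ}
    (hf : Measurable[m ⊔ MeasurableSpace.comap S inferInstance] f) : ∫ x, f x * A x ∂μ = 0 := by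
  rw [h.indep_A.integral_mul (h.le_sup_comap_S hm) h.measurable_A.comap_le hf
    (Measurable.of_comap_le le_rfl), h.integral_A, mul_zero]

lemma integral_mul_A_sq (h : IsFreshChannelNoise m μ S A p σ) (hm : m ≤ m0) {f : Ω → ℝ}
    (hf : Measurable[m] f) : ∫ x, f x * A x ^ 2 ∂μ = (∫ x, f x ∂μ) * σ ^ 2 := by
  rw [h.indep_A.integral_mul (h.le_sup_comap_S hm) h.measurable_A.comap_le
    (hf.mono le_sup_left le_rfl) ((Measurable.of_comap_le le_rfl).pow_const 2), h.integral_A_sq]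

/-- The gate `1 - U S` is `{0,1}`-valued, so it equals its square; the `S`-term then averages to
`p`, and the cross term with the fresh increment `A` averages to zero. -/
theorem integral_mul_sq_update [IsFiniteMeasure μ] (h : IsFreshChannelNoise m μ S A p σ)
    (hm : m ≤ m0) {v : Ω → ℝ} (hQ : Measurable[m] Q) (hU : Measurable[m] U)
    (hU01 : ∀ x, U x = 0 ∨ U x = 1) (hv : Measurable[m] v) (hvi : Integrable v μ)
    (hvQ : Integrable (fun x => v x * Q x ^ 2) μ) :
    ∫ x, v x * ((1 - U x * S x) * Q x + A x) ^ 2 ∂μ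
      = ∫ x, v x * Q x ^ 2 ∂μ - p * ∫ x, v x * Q x ^ 2 * U x ∂μ + σ ^ 2 * ∫ x, v x ∂μ := by
  set mS := m ⊔ MeasurableSpace.comap S inferInstance
  have hG01 x := one_sub_mul_eq_zero_or_one (hU01 x) (h.S_eq_zero_or_one x)
  have hGm : Measurable[mS] fun x => 1 - U x * S x :=
    measurable_const.sub ((hU.mono le_sup_left le_rfl).mul
      ((Measurable.of_comap_le le_rfl).mono le_sup_right le_rfl))
  have hcross : Measurable[mS] fun x => 2 * (v x * (1 - U x * S x) * Q x) :=
    measurable_const.mul (((hv.mono le_sup_left le_rfl).mul hGm).mul (hQ.mono le_sup_left le_rfl))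
  have hUS : Integrable (fun x => v x * Q x ^ 2 * U x * S x) μ :=
    (hvQ.mul_of_eq_zero_or_one (hU.mono hm le_rfl).aestronglyMeasurable hU01).mul_of_eq_zero_or_one
      h.measurable_S.aestronglyMeasurable h.S_eq_zero_or_one
  have hcrossA : Integrable (fun x => 2 * (v x * (1 - U x * S x) * Q x) * A x) μ := by
    refine (h.indep_A.indepFun hcross (Measurable.of_comap_le le_rfl)).integrable_mul ?_
      (h.memLp_A.integrable one_le_two)
    refine (((integrable_mul_of_integrable_mul_sq (hQ.mono hm le_rfl).aestronglyMeasurable hvi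
      hvQ).mul_of_eq_zero_or_one (hGm.mono (h.le_sup_comap_S hm) le_rfl).aestronglyMeasurable
      hG01).const_mul 2).congr (ae_of_all _ fun x => ?_)
    simp only
    ring
  have hA2 : Integrable (fun x => v x * A x ^ 2) μ :=
    (h.indep_A.indepFun (hv.mono le_sup_left le_rfl)
      ((Measurable.of_comap_le le_rfl).pow_const 2)).integrable_mul hvi h.memLp_A.integrable_sq
  have hexpand : ∀ x, v x * ((1 - U x * S x) * Q x + A x) ^ 2 = v x * Q x ^ 2
      - v x * Q x ^ 2 * U x * S x + 2 * (v x * (1 - U x * S x) * Q x) * A x + v x * A x ^ 2 := by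
    intro x
    have hG : (1 - U x * S x) ^ 2 = 1 - U x * S x := by
      rcases hG01 x with hg | hg <;> rw [hg] <;> norm_num
    linear_combination v x * Q x ^ 2 * hG
  simp_rw [hexpand]
  rw [integral_add ?_ hA2, integral_add ?_ hcrossA, integral_sub hvQ hUS,
    h.integral_mul_S hm ((hv.fun_mul (hQ.pow_const 2)).fun_mul hU), h.integral_mul_A hm hcross,
    h.integral_mul_A_sq hm hv]
  · ring
  · exact hvQ.sub hUS
  · exact (hvQ.sub hUS).add hcrossA

theorem drift_plus_penalty_le [IsProbabilityMeasure μ] (h : IsFreshChannelNoise m μ S A p σ)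
    (hm : m ≤ m0) {H w J : Ω → ℝ} {wbar ρ V : ℝ} (hp : 0 < p) (hρ : ρ ∈ Set.Ioc (0 : ℝ) 1)
    (hV : 0 ≤ V) (hQ : Measurable[m] Q) (hH : Measurable[m] H) (hw : Measurable[m] w)
    (hQ2 : MemLp Q 2 μ) (hH2 : MemLp H 2 μ) (hwi : Integrable w μ)
    (hwmean : ∫ x, w x ∂μ = wbar) (hwQ : IndepFun w Q μ)
    (hwQi : Integrable (fun x => w x * Q x ^ 2) μ)
    (hJ : ∀ x, J x = (w x - wbar + wbar / (p * ρ)) * p * Q x ^ 2)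
    (hU : ∀ x, U x = if J x > V * H x then 1 else 0) :
    ∫ x, w x * ((1 - U x * S x) * Q x + A x) ^ 2 ∂μ
      + (wbar / (p * ρ) - wbar)
        * (∫ x, ((1 - U x * S x) * Q x + A x) ^ 2 ∂μ - ∫ x, Q x ^ 2 ∂μ)
      + V / 2 * (∫ x, max (H x - ρ + U x) 0 ^ 2 ∂μ - ∫ x, H x ^ 2 ∂μ)
      ≤ wbar * σ ^ 2 / (p * ρ) + V / 2 := by
  have hUm : Measurable[m] U := measurable_of_threshold hH (by rw [funext hJ]; fun_prop) hU
  have hU01 : ∀ x, U x = 0 ∨ U x = 1 := fun x => by rw [hU x]; split_ifs <;> simp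
  have hwQ2 : ∫ x, w x * Q x ^ 2 ∂μ = wbar * ∫ x, Q x ^ 2 ∂μ := by
    rw [← hwmean]
    exact (hwQ.comp measurable_id (measurable_id.pow_const 2)).integral_fun_mul_eq_mul_integral
      (hw.mono hm le_rfl).aestronglyMeasurable
      ((hQ.mono hm le_rfl).pow_const 2).aestronglyMeasurable
  have hweighted := h.integral_mul_sq_update hm hQ hUm hU01 hw hwi hwQi
  have hplain := h.integral_mul_sq_update hm hQ hUm hU01 (v := fun _ => 1) measurable_const
    (integrable_const 1) (by simpa using hQ2.integrable_sq)
  simp only [one_mul, integral_const, probReal_univ, smul_eq_mul, mul_one] at hplain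
  have hqueue := integral_sq_max_index_le hp hρ hV hQ2 hH2 hwQi hwQ2 (hUm.mono hm le_rfl) hJ hU
  have hK : wbar * σ ^ 2 / (p * ρ) = σ ^ 2 * wbar + σ ^ 2 * (wbar / (p * ρ) - wbar) := by
    field_simp [hp.ne', hρ.1.ne']
    ring
  rw [hweighted, hplain, hwQ2, hwmean, hK]
  linarith

end IsFreshChannelNoise

end Probability

theorem single_terminal_UoI_bound_general {Ω : Type*} {m0 : MeasurableSpace Ω}
    (μ : Measure Ω) [IsProbabilityMeasure μ]
    (ℱ : Filtration ℕ m0)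
    (p ρ σ wbar V : ℝ)
    (hp : p ∈ Set.Ioc (0 : ℝ) 1) (hρ : ρ ∈ Set.Ioc (0 : ℝ) 1)
    (hwbar : 0 < wbar) (hV : 0 < V)
    (Q H w S A U J : ℕ → Ω → ℝ)
    (hQmeas : ∀ t, Measurable[ℱ t] (Q t))
    (hHmeas : ∀ t, Measurable[ℱ t] (H t))
    (hwmeas : ∀ t, Measurable[ℱ t] (w (t + 1)))
    (hQ0 : MemLp (Q 0) 2 μ)
    (hH0 : ∀ x, H 0 x = 0)
    (hHpos : ∀ t x, 0 ≤ H t x)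
    (hwpos : ∀ t x, 0 ≤ w t x)
    (hwint : ∀ t, Integrable (w t) μ)
    (hwmean : ∀ t, (∫ x, w t x ∂μ) = wbar)
    (hwQindep : ∀ t, IndepFun (w (t + 1)) (Q t) μ)
    (hwQint : ∀ t, Integrable (fun x => w (t + 1) x * Q t x ^ 2) μ)
    (hSmeas : ∀ t, Measurable (S t))
    (hS01 : ∀ t x, S t x = 0 ∨ S t x = 1)
    (hSindep : ∀ t, Indep (ℱ t) (MeasurableSpace.comap (S t) inferInstance) μ)
    (hSp : ∀ t, μ {x | S t x = 1} = ENNReal.ofReal p)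
    (hAmeas : ∀ t, Measurable (A t)) (hA2 : ∀ t, MemLp (A t) 2 μ)
    (hAindep : ∀ t, Indep (ℱ t ⊔ MeasurableSpace.comap (S t) inferInstance)
        (MeasurableSpace.comap (A t) inferInstance) μ)
    (hAmean : ∀ t, (∫ x, A t x ∂μ) = 0)
    (hAvar : ∀ t, (∫ x, A t x ^ 2 ∂μ) = σ ^ 2)
    (hJ : ∀ t x, J t x = (w (t + 1) x - wbar + wbar / (p * ρ)) * p * Q t x ^ 2)
    (hU : ∀ t x, U t x = if J t x > V * H t x then (1 : ℝ) else 0)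
    (hQdyn : ∀ t x, Q (t + 1) x = (1 - U t x * S t x) * Q t x + A t x)
    (hHdyn : ∀ t x, H (t + 1) x = max (H t x - ρ + U t x) 0) :
    limsup (fun T : ℕ => (1 / (T : ℝ)) * ∑ t ∈ Finset.range T, ∫ x, U t x ∂μ) atTop
        ≤ ρ
    ∧ limsup (fun T : ℕ => (1 / (T : ℝ)) *
          ∑ t ∈ Finset.range T, ∫ x, w (t + 1) x * Q (t + 1) x ^ 2 ∂μ) atTop
        ≤ wbar * σ ^ 2 / (p * ρ) + V / 2 := by
  obtain ⟨hp0, hp1⟩ := hp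
  have hnoise t : IsFreshChannelNoise (ℱ t) μ (S t) (A t) p σ :=
    ⟨hSmeas t, hS01 t, hSindep t, integral_eq_of_eq_zero_or_one hp0.le (hSmeas t) (hS01 t) (hSp t),
      hAmeas t, hA2 t, hAindep t, hAmean t, hAvar t⟩
  have hUm t : Measurable (U t) := by
    refine (measurable_of_threshold (hHmeas t) ?_ (hU t)).mono (ℱ.le t) le_rfl
    rw [funext (hJ t)]
    exact ((((hwmeas t).sub_const _).add_const _).mul_const _).mul ((hQmeas t).pow_const 2)
  have hU01 t x : U t x = 0 ∨ U t x = 1 := by rw [hU t x]; split_ifs <;> simp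
  have hUIcc t x : U t x ∈ Set.Icc (0 : ℝ) 1 := by rcases hU01 t x with h | h <;> simp [h]
  have hUi t : Integrable (U t) μ := Integrable.of_bound (hUm t).aestronglyMeasurable 1
    (ae_of_all _ fun x => by rcases hU01 t x with h | h <;> simp [h])
  have hQ2 := memLp_two_of_update hSmeas hS01 hA2 hUm hU01 hQ0 hQdyn
  have hH2 := memLp_of_queue (μ := μ) hρ.1.le
    (fun t => ((hHmeas t).mono (ℱ.le t) le_rfl).aestronglyMeasurable) hHpos
    (fun t x => (hUIcc t x).2) hH0 hHdyn 2
  let L t := (wbar / (p * ρ) - wbar) * ∫ x, Q t x ^ 2 ∂μ + V / 2 * ∫ x, H t x ^ 2 ∂μ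
  have hstep t : ∫ x, w (t + 1) x * Q (t + 1) x ^ 2 ∂μ + L (t + 1) - L t
      ≤ wbar * σ ^ 2 / (p * ρ) + V / 2 := by
    have := (hnoise t).drift_plus_penalty_le (ℱ.le t) hp0 hρ hV.le (hQmeas t) (hHmeas t)
      (hwmeas t) (hQ2 t) (hH2 t) (hwint _) (hwmean _) (hwQindep t) (hwQint t) (hJ t) (hU t)
    simp only [L, hQdyn t, hHdyn t]
    linarith
  have hB : 0 ≤ wbar / (p * ρ) - wbar :=
    sub_nonneg.2 (le_div_self hwbar.le (mul_pos hp0 hρ.1) (mul_le_one₀ hp1 hρ.1.le hρ.2))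
  have hc t : 0 ≤ ∫ x, w (t + 1) x * Q (t + 1) x ^ 2 ∂μ :=
    integral_nonneg fun x => mul_nonneg (hwpos _ x) (sq_nonneg _)
  have hHsq (T : ℕ) : ∫ x, H T x ^ 2 ∂μ
      ≤ 2 * (wbar * σ ^ 2 / (p * ρ) + V / 2) / V * T + 2 * L 0 / V := by
    have hLT : V / 2 * ∫ x, H T x ^ 2 ∂μ ≤ L T := le_add_of_nonneg_left (by positivity)
    rw [div_mul_eq_mul_div, ← add_div, le_div_iff₀ hV]
    linarith [sum_add_le_of_drift hstep T,
      Finset.sum_nonneg fun t (_ : t ∈ Finset.range T) => hc t]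
  exact ⟨limsup_avg_integral_le_of_queue hH2 hUi (fun t x => (hUIcc t x).1) hH0 hHdyn hHsq,
    limsup_avg_le_of_drift hc (fun t => by positivity) hstep⟩

/-- Theorem 1: under the update-index-based threshold scheme (transmit iff
`J t > V·H t`, with update index `J t = (ω (t+1) − ω̄ + ω̄/(p·ρ))·p·(Q t)²` and
virtual queue `H (t+1) = max (H t − ρ + U t) 0`), the average updating frequency
constraint `limsup (1/T) ∑ E[U t] ≤ ρ` is satisfied, and the average UoI obeys
`limsup (1/T) ∑ E[ω (t+1)·(Q (t+1))²] ≤ ω̄·σ²/(p·ρ) + V/2`. -/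
theorem single_terminal_UoI_bound {Ω : Type*} {m0 : MeasurableSpace Ω}
    (μ : Measure Ω) [IsProbabilityMeasure μ]
    (ℱ : Filtration ℕ m0)
    (p ρ σ wbar V : ℝ)
    (hp : p ∈ Set.Ioc (0 : ℝ) 1) (hρ : ρ ∈ Set.Ioc (0 : ℝ) 1)
    (hσ : 0 < σ) (hwbar : 0 < wbar) (hV : 0 < V)
    (Q H w S A U J : ℕ → Ω → ℝ)
    (hQmeas : ∀ t, Measurable[ℱ t] (Q t))
    (hHmeas : ∀ t, Measurable[ℱ t] (H t))
    (hwmeas : ∀ t, Measurable[ℱ t] (w (t + 1)))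
    (hQ0 : MemLp (Q 0) 2 μ)
    (hH0 : ∀ x, H 0 x = 0)
    (hHpos : ∀ t x, 0 ≤ H t x)
    (hwpos : ∀ t x, 0 ≤ w t x)
    (hwint : ∀ t, Integrable (w t) μ)
    (hwmean : ∀ t, (∫ x, w t x ∂μ) = wbar)
    (hwQindep : ∀ t, IndepFun (w (t + 1)) (Q t) μ)
    (hwQint : ∀ t, Integrable (fun x => w (t + 1) x * Q t x ^ 2) μ)
    (hSmeas : ∀ t, Measurable (S t))
    (hS01 : ∀ t x, S t x = 0 ∨ S t x = 1)
    (hSindep : ∀ t, Indep (ℱ t) (MeasurableSpace.comap (S t) inferInstance) μ)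
    (hSp : ∀ t, μ {x | S t x = 1} = ENNReal.ofReal p)
    (hAmeas : ∀ t, Measurable (A t)) (hA2 : ∀ t, MemLp (A t) 2 μ)
    (hAindep : ∀ t, Indep (ℱ t ⊔ MeasurableSpace.comap (S t) inferInstance)
        (MeasurableSpace.comap (A t) inferInstance) μ)
    (hAmean : ∀ t, (∫ x, A t x ∂μ) = 0)
    (hAvar : ∀ t, (∫ x, A t x ^ 2 ∂μ) = σ ^ 2)
    (hJ : ∀ t x, J t x = (w (t + 1) x - wbar + wbar / (p * ρ)) * p * Q t x ^ 2)
    (hU : ∀ t x, U t x = if J t x > V * H t x then (1 : ℝ) else 0)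
    (hQdyn : ∀ t x, Q (t + 1) x = (1 - U t x * S t x) * Q t x + A t x)
    (hHdyn : ∀ t x, H (t + 1) x = max (H t x - ρ + U t x) 0) :
    limsup (fun T : ℕ => (1 / (T : ℝ)) * ∑ t ∈ Finset.range T, ∫ x, U t x ∂μ) atTop
        ≤ ρ
    ∧ limsup (fun T : ℕ => (1 / (T : ℝ)) *
          ∑ t ∈ Finset.range T, ∫ x, w (t + 1) x * Q (t + 1) x ^ 2 ∂μ) atTop
        ≤ wbar * σ ^ 2 / (p * ρ) + V / 2 :=
  single_terminal_UoI_bound_general μ ℱ p ρ σ wbar V hp hρ hwbar hV Q H w S A U J hQmeas hHmeas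
    hwmeas hQ0 hH0 hHpos hwpos hwint hwmean hwQindep hwQint hSmeas hS01 hSindep hSp hAmeas hA2
    hAindep hAmean hAvar hJ hU hQdyn hHdyn
end

section
/- Let N ≥ 1 and K ≥ 1 be integers, and let d_1, …, d_N > 0 be real numbers such that max_i d_i ≤ (∑_{j=1}^N d_j)/K. Define π*_i = K·d_i/(∑_{j=1}^N d_j). Then π*_i ∈ (0, 1] for every i, ∑_{i=1}^N π*_i = K, ∑_{i=1}^N d_i²/π*_i = (∑_{i=1}^N d_i)²/K, and for every π_1, …, π_N with π_i ∈ (0, 1] and ∑_{i=1}^N π_i ≤ K, one has ∑_{i=1}^N d_i²/π_i ≥ (∑_{i=1}^N d_i)²/K. In particular, π* minimizes ∑_{i=1}^N d_i²/π_i over the feasible set. -/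
/-- The interior case of the UoI upper-bound minimization (Section IV-D):
under `max_i d_i ≤ (∑_j d_j)/K`, the proportional allocation
`π*_i = K·d_i / ∑_j d_j` is feasible and minimizes `∑_i d_i²/π_i`
over all `π` with `π_i ∈ (0,1]` and `∑_i π_i ≤ K`, achieving the value `(∑_i d_i)²/K`. -/
theorem proportional_allocation_optimal (N K : ℕ) (hN : 1 ≤ N) (hK : 1 ≤ K)
    (d : Fin N → ℝ) (hd : ∀ i, 0 < d i)
    (hmax : ∀ i, d i ≤ (∑ j, d j) / (K : ℝ))
    (πs : Fin N → ℝ)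
    (hπs : ∀ i, πs i = (K : ℝ) * d i / ∑ j, d j) :
    (∀ i, πs i ∈ Set.Ioc (0 : ℝ) 1)
    ∧ ∑ i, πs i = (K : ℝ)
    ∧ ∑ i, d i ^ 2 / πs i = (∑ i, d i) ^ 2 / (K : ℝ)
    ∧ ∀ π : Fin N → ℝ, (∀ i, π i ∈ Set.Ioc (0 : ℝ) 1) → (∑ i, π i ≤ (K : ℝ)) →
        (∑ i, d i) ^ 2 / (K : ℝ) ≤ ∑ i, d i ^ 2 / π i := by
  have hKpos : (0 : ℝ) < K := by exact_mod_cast hK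
  have hS : 0 < ∑ j, d j :=
    Finset.sum_pos (fun i _ => hd i) (Finset.univ_nonempty_iff.2 ⟨⟨0, hN⟩⟩)
  refine ⟨?_, ?_, ?_, ?_⟩
  · intro i
    rw [hπs i]
    constructor
    · exact div_pos (mul_pos hKpos (hd i)) hS
    · rw [div_le_one hS]
      calc (K : ℝ) * d i ≤ K * ((∑ j, d j) / K) := by
            exact mul_le_mul_of_nonneg_left (hmax i) hKpos.le
        _ = ∑ j, d j := by field_simp
  · have : ∑ i, πs i = (K : ℝ) * (∑ i, d i) / ∑ j, d j := by
      rw [Finset.mul_sum, Finset.sum_div]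
      exact Finset.sum_congr rfl fun i _ => hπs i
    rw [this, mul_div_assoc, div_self hS.ne', mul_one]
  · have : ∀ i, d i ^ 2 / πs i = d i * (∑ j, d j) / K := by
      intro i
      rw [hπs i]
      field_simp [hKpos.ne', hS.ne', (hd i).ne']
    rw [Finset.sum_congr rfl fun i _ => this i, ← Finset.sum_div, ← Finset.sum_mul, sq]
  · intro π hπ hsum
    have key : (∑ i, d i) ^ 2 ≤ (∑ i, π i) * ∑ i, d i ^ 2 / π i := by
      have := Finset.sum_mul_sq_le_sq_mul_sq Finset.univ
        (fun i => Real.sqrt (π i)) (fun i => d i / Real.sqrt (π i))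
      calc (∑ i, d i) ^ 2
          = (∑ i, Real.sqrt (π i) * (d i / Real.sqrt (π i))) ^ 2 := by
            congr 1
            refine Finset.sum_congr rfl fun i _ => ?_
            rw [mul_div_cancel₀]
            exact (Real.sqrt_pos.2 (hπ i).1).ne'
        _ ≤ (∑ i, Real.sqrt (π i) ^ 2) * ∑ i, (d i / Real.sqrt (π i)) ^ 2 := this
        _ = (∑ i, π i) * ∑ i, d i ^ 2 / π i := by
            congr 1
            · exact Finset.sum_congr rfl fun i _ => Real.sq_sqrt (hπ i).1.le
            · refine Finset.sum_congr rfl fun i _ => ?_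
              rw [div_pow, Real.sq_sqrt (hπ i).1.le]
    have hpos : 0 ≤ ∑ i, d i ^ 2 / π i :=
      Finset.sum_nonneg fun i _ => div_nonneg (sq_nonneg _) (hπ i).1.le
    rw [div_le_iff₀ hKpos]
    calc (∑ i, d i) ^ 2 ≤ (∑ i, π i) * ∑ i, d i ^ 2 / π i := key
      _ ≤ K * ∑ i, d i ^ 2 / π i := mul_le_mul_of_nonneg_right hsum hpos
      _ = (∑ i, d i ^ 2 / π i) * K := mul_comm _ _
end
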